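/- Let T > 0, let H be a real Hilbert space with inner product ⟪·,·⟫ and norm ‖·‖, and let A : H × H → ℝ be a continuous bilinear form. Let θ, ρ : [0,T] → H be continuously differentiable and let g : [0,T] → H be continuous. Assume: (i) for all t ∈ (0,T] and all χ ∈ H, ⟪θ'(t), χ⟫ + A(g(t), χ) = ⟪ρ'(t), χ⟫; and (ii) for all t ∈ [0,T], ∫₀ᵗ A(g(s), θ(s)) ds ≥ 0. Then for every t ∈ (0,T], the error e(t) := ρ(t) − θ(t) satisfies ‖e(t)‖ ≤ ‖θ(0)‖ + ∫₀ᵗ ‖ρ'(s)‖ ds + ‖ρ(t)‖. (Theorem 3.1 of the paper: there θ = u_h − R_h u, ρ = u − R_h u, e = u − u_h, g = ∂_t^{1−α} θ, and hypothesis (ii) is the positivity property of the Riemann–Liouville derivative with respect to the positive-definite bilinear form A.) -/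

import Mathlib

/-!
Testing the error equation with `χ = θ(t)` gives the energy identity
`½ d/dt ‖θ‖² = ⟪ρ', θ⟫ - A(g, θ)`; integrating and using the positivity of `∫ A(g, θ)` yields
`‖θ(t)‖² ≤ ‖θ(0)‖² + 2 ∫₀ᵗ ‖ρ'‖ ‖θ‖`. A quadratic Gronwall lemma turns this into
`‖θ(t)‖ ≤ ‖θ(0)‖ + ∫₀ᵗ ‖ρ'‖`, and `e = ρ - θ` is bounded by the triangle inequality.
-/

open MeasureTheory Set
open scoped RealInnerProductSpace

theorem hasDerivAt_integral_of_continuousOn_Icc {E : Type*} [NormedAddCommGroup E]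
    [NormedSpace ℝ E] [CompleteSpace E] {f : ℝ → E} {a b x : ℝ}
    (hf : ContinuousOn f (Icc a b)) (hx : x ∈ Ioo a b) :
    HasDerivAt (fun y => ∫ s in a..y, f s) (f x) x :=
  have hnhds : Icc a b ∈ nhds x := Icc_mem_nhds hx.1 hx.2
  intervalIntegral.integral_hasDerivAt_right
    ((hf.mono (Icc_subset_Icc le_rfl hx.2.le)).intervalIntegrable_of_Icc hx.1.le)
    ⟨Icc a b, hnhds, hf.aestronglyMeasurable measurableSet_Icc⟩ (hf.continuousAt hnhds)

/-- The strict inequality keeps `c ^ 2 + 2 ∫ a u` positive, so that its square root is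
differentiable, with derivative `a u / √(⋯) ≤ a`. -/
theorem le_add_integral_of_sq_lt_sq_add_two_mul_integral {u a : ℝ → ℝ} {c t₀ t : ℝ}
    (ht : t₀ ≤ t) (hc : 0 ≤ c) (hu : ContinuousOn u (Icc t₀ t)) (ha : ContinuousOn a (Icc t₀ t))
    (ha₀ : ∀ s ∈ Icc t₀ t, 0 ≤ a s)
    (h : ∀ s ∈ Icc t₀ t, u s ^ 2 < c ^ 2 + 2 * ∫ r in t₀..s, a r * u r) :
    u t ≤ c + ∫ r in t₀..t, a r := by
  set F : ℝ → ℝ := fun s => c ^ 2 + 2 * ∫ r in t₀..s, a r * u r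
  have hau : ContinuousOn (fun r => a r * u r) (Icc t₀ t) := ha.mul hu
  have hF_pos : ∀ s ∈ Icc t₀ t, 0 < F s := fun s hs => (sq_nonneg _).trans_lt (h s hs)
  have hu_le : ∀ s ∈ Icc t₀ t, u s ≤ √(F s) := fun s hs =>
    (le_abs_self _).trans (Real.abs_le_sqrt (h s hs).le)
  have hF_cont : ContinuousOn F (Icc t₀ t) := by
    have := intervalIntegral.continuousOn_primitive_interval
      (μ := volume) ((uIcc_of_le ht).symm ▸ hau.integrableOn_Icc)
    rw [uIcc_of_le ht] at this
    exact continuousOn_const.add (continuousOn_const.mul this)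
  have hG_deriv : ∀ s ∈ Ioo t₀ t,
      HasDerivAt (fun s => √(F s)) (2 * (a s * u s) / (2 * √(F s))) s := fun s hs =>
    (((hasDerivAt_integral_of_continuousOn_Icc hau hs).const_mul 2).const_add _).sqrt
      (hF_pos s (Ioo_subset_Icc_self hs)).ne'
  have hG_deriv_le : ∀ s ∈ Ioo t₀ t, 2 * (a s * u s) / (2 * √(F s)) ≤ a s := by
    intro s hs
    have hs' := Ioo_subset_Icc_self hs
    rw [div_le_iff₀ (mul_pos two_pos (Real.sqrt_pos.2 (hF_pos s hs')))]
    nlinarith [mul_le_mul_of_nonneg_left (hu_le s hs') (ha₀ s hs')]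
  have hFTC := intervalIntegral.sub_le_integral_of_hasDeriv_right_of_le ht
    (Real.continuous_sqrt.comp_continuousOn hF_cont)
    (fun s hs => (hG_deriv s hs).hasDerivWithinAt) ha.integrableOn_Icc hG_deriv_le
  have hF₀ : √(F t₀) = c := by simp [F, Real.sqrt_sq hc]
  simp only [Function.comp_apply, hF₀] at hFTC
  linarith [hu_le t ⟨ht, le_rfl⟩]

theorem le_add_integral_of_sq_le_sq_add_two_mul_integral {u a : ℝ → ℝ} {c t₀ t : ℝ}
    (ht : t₀ ≤ t) (hc : 0 ≤ c) (hu : ContinuousOn u (Icc t₀ t)) (ha : ContinuousOn a (Icc t₀ t))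
    (ha₀ : ∀ s ∈ Icc t₀ t, 0 ≤ a s)
    (h : ∀ s ∈ Icc t₀ t, u s ^ 2 ≤ c ^ 2 + 2 * ∫ r in t₀..s, a r * u r) :
    u t ≤ c + ∫ r in t₀..t, a r := by
  refine le_of_forall_pos_le_add fun ε hε => ?_
  have := le_add_integral_of_sq_lt_sq_add_two_mul_integral (c := c + ε) ht (by positivity)
    hu ha ha₀ fun s hs => (h s hs).trans_lt (by nlinarith)
  linarith

theorem norm_sq_eq_add_two_mul_integral_inner {E : Type*} [NormedAddCommGroup E]
    [InnerProductSpace ℝ E] {θ θ' : ℝ → E} {a b : ℝ} (hab : a ≤ b)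
    (hθ : ∀ s ∈ Icc a b, HasDerivAt θ (θ' s) s) (hθ' : ContinuousOn θ' (Icc a b)) :
    ‖θ b‖ ^ 2 = ‖θ a‖ ^ 2 + 2 * ∫ s in a..b, ⟪θ s, θ' s⟫ := by
  have hθ_cont : ContinuousOn θ (Icc a b) := fun s hs =>
    (hθ s hs).continuousAt.continuousWithinAt
  rw [← intervalIntegral.integral_const_mul,
    intervalIntegral.integral_eq_sub_of_hasDerivAt (f := fun s => ‖θ s‖ ^ 2)
      (fun s hs => (hθ s (uIcc_of_le hab ▸ hs)).norm_sq)
      ((continuousOn_const.mul (hθ_cont.inner hθ')).intervalIntegrable_of_Icc hab)]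
  ring

theorem norm_sq_le_add_two_mul_integral_norm_mul_norm {H : Type*} [NormedAddCommGroup H]
    [InnerProductSpace ℝ H] {T : ℝ} {A : H →L[ℝ] H →L[ℝ] ℝ} {θ θ' ρ' g : ℝ → H}
    (hθ : ∀ t ∈ Icc (0:ℝ) T, HasDerivAt θ (θ' t) t) (hθ' : ContinuousOn θ' (Icc 0 T))
    (hρ' : ContinuousOn ρ' (Icc 0 T)) (hg : ContinuousOn g (Icc 0 T))
    (heq : ∀ t ∈ Ioc (0:ℝ) T, ∀ χ : H, ⟪θ' t, χ⟫ + A (g t) χ = ⟪ρ' t, χ⟫)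
    (hpos : ∀ t ∈ Icc (0:ℝ) T, 0 ≤ ∫ s in (0:ℝ)..t, A (g s) (θ s))
    {t : ℝ} (ht : t ∈ Icc (0:ℝ) T) :
    ‖θ t‖ ^ 2 ≤ ‖θ 0‖ ^ 2 + 2 * ∫ s in (0:ℝ)..t, ‖ρ' s‖ * ‖θ s‖ := by
  have hsub : Icc 0 t ⊆ Icc 0 T := Icc_subset_Icc le_rfl ht.2
  have hθ_cont : ContinuousOn θ (Icc 0 t) := fun s hs =>
    (hθ s (hsub hs)).continuousAt.continuousWithinAt
  have hρθ : IntervalIntegrable (fun s => ⟪ρ' s, θ s⟫) volume 0 t :=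
    ((hρ'.mono hsub).inner hθ_cont).intervalIntegrable_of_Icc ht.1
  have hAθ : IntervalIntegrable (fun s => A (g s) (θ s)) volume 0 t :=
    ContinuousOn.intervalIntegrable_of_Icc ht.1
      ((A.continuous.comp_continuousOn (hg.mono hsub)).clm_apply hθ_cont)
  have hρθ_norm : IntervalIntegrable (fun s => ‖ρ' s‖ * ‖θ s‖) volume 0 t :=
    (((hρ'.mono hsub).norm).mul hθ_cont.norm).intervalIntegrable_of_Icc ht.1
  have henergy : ∫ s in (0:ℝ)..t, ⟪θ s, θ' s⟫
      = (∫ s in (0:ℝ)..t, ⟪ρ' s, θ s⟫) - ∫ s in (0:ℝ)..t, A (g s) (θ s) := by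
    rw [← intervalIntegral.integral_sub hρθ hAθ]
    refine intervalIntegral.integral_congr_ae (Filter.Eventually.of_forall fun s hs => ?_)
    rw [uIoc_of_le ht.1] at hs
    rw [real_inner_comm, ← heq s ⟨hs.1, hs.2.trans ht.2⟩ (θ s)]
    ring
  have hbound : ∫ s in (0:ℝ)..t, ⟪ρ' s, θ s⟫ ≤ ∫ s in (0:ℝ)..t, ‖ρ' s‖ * ‖θ s‖ :=
    intervalIntegral.integral_mono_on ht.1 hρθ hρθ_norm fun s _ => real_inner_le_norm _ _
  rw [norm_sq_eq_add_two_mul_integral_inner ht.1 (fun s hs => hθ s (hsub hs)) (hθ'.mono hsub),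
    henergy]
  linarith [hpos t ht]

theorem stmt_11_general {H : Type*} [NormedAddCommGroup H] [InnerProductSpace ℝ H]
    (T : ℝ)
    (A : H →L[ℝ] H →L[ℝ] ℝ)
    (θ θ' ρ ρ' g : ℝ → H)
    (hθ : ∀ t ∈ Icc (0:ℝ) T, HasDerivAt θ (θ' t) t)
    (hθ' : ContinuousOn θ' (Icc 0 T))
    (hρ' : ContinuousOn ρ' (Icc 0 T))
    (hg : ContinuousOn g (Icc 0 T))
    (heq : ∀ t ∈ Ioc (0:ℝ) T, ∀ χ : H, ⟪θ' t, χ⟫ + A (g t) χ = ⟪ρ' t, χ⟫)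
    (hpos : ∀ t ∈ Icc (0:ℝ) T, 0 ≤ ∫ s in (0:ℝ)..t, A (g s) (θ s)) :
    ∀ t ∈ Ioc (0:ℝ) T,
      ‖ρ t - θ t‖ ≤ ‖θ 0‖ + (∫ s in (0:ℝ)..t, ‖ρ' s‖) + ‖ρ t‖ := by
  intro t ht
  have hsub : Icc 0 t ⊆ Icc 0 T := Icc_subset_Icc le_rfl ht.2
  have hθ_bound : ‖θ t‖ ≤ ‖θ 0‖ + ∫ s in (0:ℝ)..t, ‖ρ' s‖ :=
    le_add_integral_of_sq_le_sq_add_two_mul_integral ht.1.le (norm_nonneg _)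
      (fun s hs => (hθ s (hsub hs)).continuousAt.norm.continuousWithinAt)
      (hρ'.norm.mono hsub) (fun _ _ => norm_nonneg _)
      fun s hs => norm_sq_le_add_two_mul_integral_norm_mul_norm hθ hθ' hρ' hg heq hpos (hsub hs)
  calc ‖ρ t - θ t‖ ≤ ‖ρ t‖ + ‖θ t‖ := norm_sub_le _ _
    _ ≤ ‖θ 0‖ + (∫ s in (0:ℝ)..t, ‖ρ' s‖) + ‖ρ t‖ := by linarith

theorem stmt_11 {H : Type*} [NormedAddCommGroup H] [InnerProductSpace ℝ H] [CompleteSpace H]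
    (T : ℝ) (hT : 0 < T)
    (A : H →L[ℝ] H →L[ℝ] ℝ)
    (θ θ' ρ ρ' g : ℝ → H)
    (hθ : ∀ t ∈ Icc (0:ℝ) T, HasDerivAt θ (θ' t) t)
    (hθ' : ContinuousOn θ' (Icc 0 T))
    (hρ : ∀ t ∈ Icc (0:ℝ) T, HasDerivAt ρ (ρ' t) t)
    (hρ' : ContinuousOn ρ' (Icc 0 T))
    (hg : ContinuousOn g (Icc 0 T))
    (heq : ∀ t ∈ Ioc (0:ℝ) T, ∀ χ : H, ⟪θ' t, χ⟫ + A (g t) χ = ⟪ρ' t, χ⟫)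
    (hpos : ∀ t ∈ Icc (0:ℝ) T, 0 ≤ ∫ s in (0:ℝ)..t, A (g s) (θ s)) :
    ∀ t ∈ Ioc (0:ℝ) T,
      ‖ρ t - θ t‖ ≤ ‖θ 0‖ + (∫ s in (0:ℝ)..t, ‖ρ' s‖) + ‖ρ t‖ :=
  stmt_11_general T A θ θ' ρ ρ' g hθ hθ' hρ' hg heq hpos
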